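/- Let ℤ act on ℂ* = ℂ ∖ {0} (with its subspace topology) by k · z = 2^k z. Then the orbit space ℂ*/ℤ, equipped with the quotient topology, is homeomorphic to the torus S¹ × S¹; in particular it is a compact connected topological space. -/

import Mathlib

/-!
Polar coordinates `z = r u` identify `ℂ*` with `(0, ∞) × S¹`, and the action only rescales `r` by
powers of `2`, while `r ↦ exp (2πi log₂ r)` identifies `(0, ∞) / 2^ℤ` with `S¹`. Hence
`z ↦ (exp (2πi log₂ |z|), z / |z|)` descends to a continuous bijection from `ℂ* / ℤ` onto the torus.
The quotient is compact, being the image of the annulus `1 ≤ |z| ≤ 2`, which meets every orbit, so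
this bijection is a homeomorphism; connectedness is inherited from the torus.
-/

noncomputable section

/-- `ℂ* = ℂ ∖ {0}` with the subspace topology. -/
abbrev Cstar : Type := {z : ℂ // z ≠ 0}

/-- The orbit relation of the `ℤ`-action `k • z = 2^k z` on `ℂ*`. -/
def orbitRel₁ (z w : Cstar) : Prop := ∃ k : ℤ, ((2 : ℝ) ^ k) • (z : ℂ) = (w : ℂ)

open Real

theorem eq_smul_iff_norm_eq_and_inv_norm_smul_eq {E : Type*} [NormedAddCommGroup E]
    [NormedSpace ℝ E] {t : ℝ} (ht : 0 < t) {x : E} (hx : x ≠ 0) (y : E) :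
    y = t • x ↔ ‖y‖ = t * ‖x‖ ∧ ‖y‖⁻¹ • y = ‖x‖⁻¹ • x := by
  have hx' : ‖x‖ ≠ 0 := norm_ne_zero_iff.2 hx
  constructor
  · rintro rfl
    refine ⟨by rw [norm_smul, norm_of_nonneg ht.le], ?_⟩
    rw [norm_smul, norm_of_nonneg ht.le, smul_smul]
    field_simp
  · rintro ⟨hnorm, hdir⟩
    have hy : ‖y‖ ≠ 0 := by rw [hnorm]; positivity
    calc y = ‖y‖ • ‖y‖⁻¹ • y := by rw [smul_smul, mul_inv_cancel₀ hy, one_smul]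
      _ = t • x := by rw [hdir, hnorm, smul_smul, mul_assoc, mul_inv_cancel₀ hx', mul_one]

theorem Real.logb_eq_add_intCast_iff {b r s : ℝ} (hb : 1 < b) (hr : 0 < r) (hs : 0 < s) (k : ℤ) :
    logb b s = logb b r + k ↔ s = b ^ k * r := by
  have hbk : 0 < b ^ k := zpow_pos (by linarith) k
  rw [← logb_injOn_pos (b := b) hb |>.eq_iff hs (mul_pos hbk hr), logb_mul hbk.ne' hr.ne',
    ← rpow_intCast, logb_rpow (by linarith) hb.ne', add_comm]

theorem Circle.exp_two_pi_mul_eq_iff {x y : ℝ} :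
    Circle.exp (2 * π * x) = Circle.exp (2 * π * y) ↔ ∃ k : ℤ, y = x + k := by
  rw [eq_comm, Circle.exp_eq_exp]
  refine exists_congr fun k => ?_
  constructor <;> intro h
  · nlinarith [pi_pos]
  · rw [h]; ring

namespace Cstar

def toCircle (z : Cstar) : Circle :=
  ⟨(‖(z : ℂ)‖⁻¹ : ℝ) • (z : ℂ), by
    show _ ∈ Metric.sphere (0 : ℂ) 1
    rw [mem_sphere_zero_iff_norm, norm_smul, norm_inv, norm_norm,
      inv_mul_cancel₀ (norm_ne_zero_iff.2 z.2)]⟩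

@[simp] theorem coe_toCircle (z : Cstar) : (toCircle z : ℂ) = (‖(z : ℂ)‖⁻¹ : ℝ) • (z : ℂ) := rfl

theorem orbitRel₁_iff (z w : Cstar) :
    orbitRel₁ z w ↔ (∃ k : ℤ, ‖(w : ℂ)‖ = 2 ^ k * ‖(z : ℂ)‖) ∧ toCircle w = toCircle z := by
  simp only [orbitRel₁, eq_comm (b := (w : ℂ)),
    eq_smul_iff_norm_eq_and_inv_norm_smul_eq (zpow_pos two_pos _) z.2, ← exists_and_right,
    ← Circle.coe_inj, coe_toCircle]

def torusMap (z : Cstar) : Circle × Circle :=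
  (Circle.exp (2 * π * logb 2 ‖(z : ℂ)‖), toCircle z)

theorem torusMap_eq_torusMap_iff (z w : Cstar) : torusMap z = torusMap w ↔ orbitRel₁ z w := by
  rw [orbitRel₁_iff, torusMap, torusMap, Prod.ext_iff, Circle.exp_two_pi_mul_eq_iff,
    eq_comm (a := toCircle z)]
  simp only [Real.logb_eq_add_intCast_iff one_lt_two (norm_pos_iff.2 z.2) (norm_pos_iff.2 w.2)]

theorem continuous_torusMap : Continuous torusMap := by
  have hnorm : ∀ z : Cstar, ‖(z : ℂ)‖ ≠ 0 := fun z => norm_ne_zero_iff.2 z.2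
  refine .prodMk ?_ (.subtype_mk (by fun_prop (disch := exact hnorm)) _)
  exact Circle.exp.continuous.comp <| continuous_const.mul <|
    (Continuous.log (by fun_prop) hnorm).div_const _

theorem surjective_torusMap : Function.Surjective torusMap := by
  rintro ⟨a, u⟩
  obtain ⟨θ, rfl⟩ := Circle.exp_surjective a
  set r : ℝ := 2 ^ (θ / (2 * π))
  have hr : 0 < r := by positivity
  have hnorm : ‖r • (u : ℂ)‖ = r := by
    rw [norm_smul, Circle.norm_coe, mul_one, norm_of_nonneg hr.le]
  refine ⟨⟨r • (u : ℂ), smul_ne_zero hr.ne' u.coe_ne_zero⟩, Prod.ext ?_ ?_⟩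
  · change Circle.exp (2 * π * logb 2 ‖r • (u : ℂ)‖) = _
    rw [hnorm, logb_rpow two_pos (by norm_num)]
    congr 1
    field_simp
  · ext
    change ((‖r • (u : ℂ)‖⁻¹ : ℝ) • r • (u : ℂ)) = u
    rw [hnorm, smul_smul, inv_mul_cancel₀ hr.ne', one_smul]

theorem exists_orbitRel₁_norm_mem_Icc (z : Cstar) :
    ∃ w : Cstar, orbitRel₁ w z ∧ ‖(w : ℂ)‖ ∈ Set.Icc 1 2 := by
  obtain ⟨n, hn⟩ := exists_mem_Ico_zpow (norm_pos_iff.2 z.2) one_lt_two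
  have h2n : (0 : ℝ) < 2 ^ n := zpow_pos two_pos n
  refine ⟨⟨(2 ^ (-n) : ℝ) • (z : ℂ), smul_ne_zero (zpow_pos two_pos _).ne' z.2⟩, ⟨n, ?_⟩, ?_⟩
  · rw [smul_smul, ← zpow_add₀ two_ne_zero, add_neg_cancel, zpow_zero, one_smul]
  · rw [norm_smul, norm_of_nonneg (zpow_pos two_pos _).le, zpow_neg]
    constructor
    · rw [le_inv_mul_iff₀ h2n, mul_one]; exact hn.1
    · rw [inv_mul_le_iff₀ h2n, ← zpow_add_one₀ two_ne_zero]; exact hn.2.le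

theorem isCompact_setOf_norm_mem_Icc : IsCompact {z : Cstar | ‖(z : ℂ)‖ ∈ Set.Icc 1 2} := by
  refine Topology.IsInducing.subtypeVal.isCompact_preimage'
    (K := {z : ℂ | ‖z‖ ∈ Set.Icc 1 2}) ?_ ?_
  · exact (isCompact_closedBall 0 2).of_isClosed_subset
      (isClosed_Icc.preimage continuous_norm) fun z hz => by simpa using hz.2
  · intro z hz
    exact ⟨⟨z, norm_ne_zero_iff.1 (by linarith [hz.1] : ‖z‖ ≠ 0)⟩, rfl⟩

instance : CompactSpace (Quot orbitRel₁) := by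
  refine isCompact_univ_iff.1 ?_
  convert isCompact_setOf_norm_mem_Icc.image (continuous_quot_mk (r := orbitRel₁))
  refine (Set.eq_univ_of_forall fun q => ?_).symm
  induction q using Quot.ind with | _ z =>
  obtain ⟨w, hwz, hw⟩ := exists_orbitRel₁_norm_mem_Icc z
  exact ⟨w, hw, Quot.sound hwz⟩

def torusLift : Quot orbitRel₁ → Circle × Circle :=
  Quot.lift torusMap fun z w => (torusMap_eq_torusMap_iff z w).2

theorem bijective_torusLift : Function.Bijective torusLift := by
  refine ⟨fun p q => ?_, (Quot.surjective_lift _).2 surjective_torusMap⟩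
  induction p using Quot.ind
  induction q using Quot.ind
  exact fun h => Quot.sound ((torusMap_eq_torusMap_iff _ _).1 h)

def torusHomeomorph : Quot orbitRel₁ ≃ₜ Circle × Circle :=
  (continuous_quot_lift _ continuous_torusMap).homeoOfEquivCompactToT2
    (f := Equiv.ofBijective torusLift bijective_torusLift)

end Cstar

/-- The orbit space `ℂ* / ℤ` of the action `k • z = 2^k z`, with the quotient topology, is
homeomorphic to the torus `S¹ × S¹`; in particular it is compact and connected. -/
theorem cstar_quot_homeomorph_torus :
    Nonempty (Quot orbitRel₁ ≃ₜ Circle × Circle) ∧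
      CompactSpace (Quot orbitRel₁) ∧ ConnectedSpace (Quot orbitRel₁) :=
  ⟨⟨Cstar.torusHomeomorph⟩, inferInstance,
    Cstar.torusHomeomorph.symm.surjective.connectedSpace Cstar.torusHomeomorph.symm.continuous⟩
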